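/- arXiv:2110.00107 — 4 statements merged into one kernel-verified Lean document; each statement's English description precedes it below -/
import Mathlib

section
/- Let S, A be {0,1}-valued random variables and X a random variable on a finite probability space with P[S=1, X=x] > 0 and 0 < P[A=1 | S=1, X=x] < 1 for all x in the range of X. For any bounded measurable functions g_0, g_1, define g(X,A) = A·g_1(X) + (1−A)·g_0(X), e_1(x) = P[A=1 | S=1, X=x], e_0(x) = 1 − e_1(x), p(x) = P[S=1 | X=x]. Then E[ S·(A − e_1(X)) / (p(X)·e_1(X)·e_0(X)) · g(X,A) | X = x ] = g_1(x) − g_0(x) for every x with P[X=x] > 0. -/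
open scoped Classical
open Finset

/-- Probability of an event on a finite probability space with weights `P`. -/
noncomputable def prW {Ω : Type*} [Fintype Ω] (P : Ω → ℝ) (E : Ω → Prop) : ℝ :=
  ∑ ω, if E ω then P ω else 0

/-- Conditional expectation of `f` given the event `E`: `E[f · 1_E] / P(E)`. -/
noncomputable def cexp {Ω : Type*} [Fintype Ω] (P : Ω → ℝ) (f : Ω → ℝ) (E : Ω → Prop) : ℝ :=
  (∑ ω, if E ω then P ω * f ω else 0) / prW P E

/-- If `g(X,A) = A·g₁(X) + (1−A)·g₀(X)`, then the IPW weight applied to `g(X,A)` recovers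
    `g₁(x) − g₀(x)` conditionally on `X = x`. -/
theorem ipw_weight_recovers_contrast
    {Ω 𝒳 : Type*} [Fintype Ω]
    (P : Ω → ℝ) (hP0 : ∀ ω, 0 ≤ P ω) (hP1 : ∑ ω, P ω = 1)
    (S A : Ω → ℝ) (X : Ω → 𝒳)
    (hS : ∀ ω, S ω = 0 ∨ S ω = 1) (hA : ∀ ω, A ω = 0 ∨ A ω = 1)
    (g0 g1 : 𝒳 → ℝ)
    (e1 e0 p : 𝒳 → ℝ)
    (he1 : ∀ x, e1 x = cexp P (fun ω => if A ω = 1 then 1 else 0)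
      (fun ω => S ω = 1 ∧ X ω = x))
    (he0 : ∀ x, e0 x = 1 - e1 x)
    (hp : ∀ x, p x = cexp P (fun ω => if S ω = 1 then 1 else 0) (fun ω => X ω = x))
    (hpos : ∀ x, (∃ ω, X ω = x) →
      0 < prW P (fun ω => S ω = 1 ∧ X ω = x) ∧ 0 < e1 x ∧ e1 x < 1) :
    ∀ x, 0 < prW P (fun ω => X ω = x) →
      cexp P
        (fun ω => S ω * (A ω - e1 (X ω)) / (p (X ω) * e1 (X ω) * e0 (X ω)) *
          (A ω * g1 (X ω) + (1 - A ω) * g0 (X ω)))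
        (fun ω => X ω = x)
        = g1 x - g0 x := by
  intro x hT
  have hex : ∃ ω, X ω = x := by
    by_contra h
    push_neg at h
    have : prW P (fun ω => X ω = x) = 0 := by
      unfold prW
      exact Finset.sum_eq_zero (fun ω _ => by simp [h ω])
    linarith
  obtain ⟨hQ, he1pos, he1lt⟩ := hpos x hex
  set T := prW P (fun ω => X ω = x) with hTdef
  set Q := prW P (fun ω => S ω = 1 ∧ X ω = x) with hQdef
  set R := ∑ ω, if S ω = 1 ∧ X ω = x then P ω * (if A ω = 1 then 1 else 0) else 0 with hRdef
  have hTne : T ≠ 0 := ne_of_gt hT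
  have hQne : Q ≠ 0 := ne_of_gt hQ
  have he1ne : e1 x ≠ 0 := ne_of_gt he1pos
  have he0val : e0 x = 1 - e1 x := he0 x
  have he0ne : e0 x ≠ 0 := by rw [he0val]; linarith
  have hpx : p x = Q / T := by
    rw [hp]
    unfold cexp prW
    congr 1
    refine Finset.sum_congr rfl fun ω _ => ?_
    by_cases hX : X ω = x <;> by_cases hS' : S ω = 1 <;> simp [hX, hS']
  have hpne : p x ≠ 0 := by
    rw [hpx]; exact div_ne_zero hQne hTne
  have h10 : (1:ℝ) - e1 x ≠ 0 := by linarith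
  have he1x : e1 x = R / Q := by
    rw [he1, hQdef, hRdef]; unfold cexp; congr!
  have hR : R = e1 x * Q := by
    rw [he1x]; field_simp
  -- pointwise identity
  have key : ∀ ω,
      (if X ω = x then P ω * (S ω * (A ω - e1 (X ω)) / (p (X ω) * e1 (X ω) * e0 (X ω)) *
        (A ω * g1 (X ω) + (1 - A ω) * g0 (X ω))) else 0)
      = g1 x / (p x * e1 x) * (if S ω = 1 ∧ X ω = x then P ω * (if A ω = 1 then 1 else 0) else 0)
        + (-(g0 x / (p x * e0 x))) *
          ((if S ω = 1 ∧ X ω = x then P ω else 0)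
            - (if S ω = 1 ∧ X ω = x then P ω * (if A ω = 1 then 1 else 0) else 0)) := by
    intro ω
    by_cases hX : X ω = x
    · rcases hS ω with hs | hs
      · have : ¬ (S ω = 1) := by rw [hs]; norm_num
        simp [hX, this, hs]
      · rcases hA ω with ha | ha
        · have h01 : (0:ℝ) ≠ 1 := by norm_num
          simp only [hX, hs, ha, and_self, if_true, h01, if_false]
          rw [he0val]
          field_simp [he1ne, hpne, h10]
          ring
        · simp only [hX, hs, ha, and_self, if_true, if_pos]
          rw [he0val]
          field_simp [he1ne, hpne, h10]
          ring
    · have : ¬ (S ω = 1 ∧ X ω = x) := by tauto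
      simp [hX, this]
  unfold cexp
  rw [← hTdef]
  have hsum : (∑ ω, if X ω = x then
        P ω * (S ω * (A ω - e1 (X ω)) / (p (X ω) * e1 (X ω) * e0 (X ω)) *
          (A ω * g1 (X ω) + (1 - A ω) * g0 (X ω))) else 0)
      = g1 x / (p x * e1 x) * R + (-(g0 x / (p x * e0 x))) * (Q - R) := by
    calc (∑ ω, if X ω = x then
        P ω * (S ω * (A ω - e1 (X ω)) / (p (X ω) * e1 (X ω) * e0 (X ω)) *
          (A ω * g1 (X ω) + (1 - A ω) * g0 (X ω))) else 0)
        = ∑ ω, (g1 x / (p x * e1 x) * (if S ω = 1 ∧ X ω = x then P ω * (if A ω = 1 then 1 else 0) else 0)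
          + (-(g0 x / (p x * e0 x))) *
            ((if S ω = 1 ∧ X ω = x then P ω else 0)
              - (if S ω = 1 ∧ X ω = x then P ω * (if A ω = 1 then 1 else 0) else 0))) :=
          Finset.sum_congr rfl fun ω _ => key ω
      _ = g1 x / (p x * e1 x) * R + (-(g0 x / (p x * e0 x))) * (Q - R) := by
          rw [Finset.sum_add_distrib, ← Finset.mul_sum, ← Finset.mul_sum,
            Finset.sum_sub_distrib, hRdef, hQdef]
          unfold prW
          congr!
  rw [hsum, hR, hpx, he0val]
  field_simp [h10]
  ring
end

section
/- On a finite probability space, let S, A ∈ {0,1}, Y real-valued, X discrete, with p(x) = P[S=1 | X=x] > 0 and e_1(x) = P[A=1 | X=x, S=1] ∈ (0,1) for all x in the support of X, and e_0 = 1 − e_1. Then for every x in the support of X: E[ S·(A − e_1(X)) / (p(X)·e_1(X)·e_0(X)) · Y | X = x ] = E[Y | X=x, S=1, A=1] − E[Y | X=x, S=1, A=0]. -/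
open scoped Classical
open Finset

/-- The IPW weight applied to the observed outcome `Y` recovers the conditional contrast
    `E[Y | X=x, S=1, A=1] − E[Y | X=x, S=1, A=0]`. -/
theorem ipw_weight_recovers_trial_contrast
    {Ω 𝒳 : Type*} [Fintype Ω]
    (P : Ω → ℝ) (hP0 : ∀ ω, 0 ≤ P ω) (hP1 : ∑ ω, P ω = 1)
    (S A Y : Ω → ℝ) (X : Ω → 𝒳)
    (hS : ∀ ω, S ω = 0 ∨ S ω = 1) (hA : ∀ ω, A ω = 0 ∨ A ω = 1)
    (e1 e0 p : 𝒳 → ℝ)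
    (hp : ∀ x, p x = cexp P (fun ω => if S ω = 1 then 1 else 0) (fun ω => X ω = x))
    (he1 : ∀ x, e1 x = cexp P (fun ω => if A ω = 1 then 1 else 0)
      (fun ω => X ω = x ∧ S ω = 1))
    (he0 : ∀ x, e0 x = 1 - e1 x)
    (hpos : ∀ x, 0 < prW P (fun ω => X ω = x) → 0 < p x ∧ 0 < e1 x ∧ e1 x < 1) :
    ∀ x, 0 < prW P (fun ω => X ω = x) →
      cexp P
        (fun ω => S ω * (A ω - e1 (X ω)) / (p (X ω) * e1 (X ω) * e0 (X ω)) * Y ω)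
        (fun ω => X ω = x)
        = cexp P Y (fun ω => X ω = x ∧ S ω = 1 ∧ A ω = 1)
          - cexp P Y (fun ω => X ω = x ∧ S ω = 1 ∧ A ω = 0) := by
  intro x hx
  obtain ⟨hpx, he1x, he1x'⟩ := hpos x hx
  have he0x : 0 < e0 x := by rw [he0]; linarith
  have hxne : prW P (fun ω => X ω = x) ≠ 0 := ne_of_gt hx
  have hpne : p x ≠ 0 := ne_of_gt hpx
  have he1ne : e1 x ≠ 0 := ne_of_gt he1x
  have hone : (1:ℝ) - e1 x ≠ 0 := by linarith
  -- P[X=x, S=1] = p x * P[X=x]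
  have hP1 : prW P (fun ω => X ω = x ∧ S ω = 1) = p x * prW P (fun ω => X ω = x) := by
    have h := hp x
    rw [cexp] at h
    have hnum : (∑ ω, if X ω = x then P ω * (if S ω = 1 then (1:ℝ) else 0) else 0)
        = prW P (fun ω => X ω = x ∧ S ω = 1) := by
      unfold prW
      refine Finset.sum_congr rfl fun ω _ => ?_
      by_cases h1 : X ω = x <;> by_cases h2 : S ω = 1 <;> simp [h1, h2]
    rw [hnum, eq_div_iff hxne] at h
    exact h.symm
  have hP1pos : 0 < prW P (fun ω => X ω = x ∧ S ω = 1) := by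
    rw [hP1]; positivity
  -- P[X=x, S=1, A=1] = e1 x * p x * P[X=x]
  have hP11 : prW P (fun ω => X ω = x ∧ S ω = 1 ∧ A ω = 1)
      = e1 x * (p x * prW P (fun ω => X ω = x)) := by
    have h : e1 x = prW P (fun ω => X ω = x ∧ S ω = 1 ∧ A ω = 1)
        / prW P (fun ω => X ω = x ∧ S ω = 1) := by
      rw [he1, cexp]
      congr 1
      unfold prW
      refine Finset.sum_congr rfl fun ω _ => ?_
      by_cases h1 : X ω = x <;> by_cases h2 : S ω = 1 <;> by_cases h3 : A ω = 1 <;>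
        simp [h1, h2, h3]
    rw [eq_div_iff (ne_of_gt hP1pos)] at h
    rw [← hP1, ← h]
  -- P[X=x, S=1, A=0] = e0 x * p x * P[X=x]
  have hP10 : prW P (fun ω => X ω = x ∧ S ω = 1 ∧ A ω = 0)
      = e0 x * (p x * prW P (fun ω => X ω = x)) := by
    have hsplit : prW P (fun ω => X ω = x ∧ S ω = 1)
        = prW P (fun ω => X ω = x ∧ S ω = 1 ∧ A ω = 1)
          + prW P (fun ω => X ω = x ∧ S ω = 1 ∧ A ω = 0) := by
      unfold prW
      rw [← Finset.sum_add_distrib]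
      refine Finset.sum_congr rfl fun ω _ => ?_
      rcases hA ω with h3 | h3 <;>
        by_cases h1 : X ω = x <;> by_cases h2 : S ω = 1 <;> simp [h1, h2, h3]
    have := hsplit
    rw [hP1, hP11] at this
    rw [he0]; linarith
  have hP11pos : 0 < prW P (fun ω => X ω = x ∧ S ω = 1 ∧ A ω = 1) := by
    rw [hP11]; positivity
  have hP10pos : 0 < prW P (fun ω => X ω = x ∧ S ω = 1 ∧ A ω = 0) := by
    rw [hP10]; positivity
  -- decompose the numerator
  have hnum : (∑ ω, if X ω = x then
        P ω * (S ω * (A ω - e1 (X ω)) / (p (X ω) * e1 (X ω) * e0 (X ω)) * Y ω) else 0)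
      = (∑ ω, if X ω = x ∧ S ω = 1 ∧ A ω = 1 then P ω * Y ω else 0) / (p x * e1 x)
        - (∑ ω, if X ω = x ∧ S ω = 1 ∧ A ω = 0 then P ω * Y ω else 0) / (p x * e0 x) := by
    rw [Finset.sum_div, Finset.sum_div, ← Finset.sum_sub_distrib]
    refine Finset.sum_congr rfl fun ω _ => ?_
    by_cases h1 : X ω = x
    · rcases hS ω with h2 | h2
      · have h2' : S ω ≠ 1 := by rw [h2]; norm_num
        simp only [h1, h2, h2', if_true, and_true, true_and, if_false, false_and]
        norm_num
      · rcases hA ω with h3 | h3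
        · have h3' : A ω ≠ 1 := by rw [h3]; norm_num
          simp only [h1, h2, h3, and_true, true_and]
          norm_num
          rw [he0]
          field_simp
        · have h3' : A ω ≠ 0 := by rw [h3]; norm_num
          simp only [h1, h2, h3, and_true, true_and]
          norm_num
          rw [he0]
          field_simp
    · simp [h1]
  rw [cexp, cexp, cexp, hnum, hP11, hP10]
  field_simp
end

section
/- (IPW identification of the CATE.) On a finite probability space, let Y^0, Y^1 be potential outcomes, S, A ∈ {0,1}, Y = A·Y^1 + (1−A)·Y^0 on the event {S=1} (consistency), X a discrete covariate, and W = f(X) a coarsened covariate (f measurable). Assume: (i) mean exchangeability over A in the trial: E[Y^a | X=x, S=1, A=a] = E[Y^a | X=x, S=1] for a ∈ {0,1} and all relevant x; (ii) mean exchangeability over S: E[Y^1 − Y^0 | X=x, S=1] = E[Y^1 − Y^0 | X=x]; (iii) positivity: p(x) = P[S=1|X=x] > 0 and e_1(x) = P[A=1|X=x,S=1] ∈ (0,1) on the support of X. Then for every w in the support of W: E[Y^1 − Y^0 | W=w] = E[ S·(A − e_1(X)) / (p(X)·e_1(X)·(1−e_1(X))) · Y | W=w ]. -/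
/-!
Both sides are conditional means given `W = w`, and since `W = f(X)` they are mixtures of the
corresponding conditional means given `X = x` over the fibre `f x = w`; so it suffices to treat
one stratum `X = x` of positive mass. There the IPW weight splits the outcome into
`Y¹ · 1{S = 1, A = 1} / (p e)` minus `Y⁰ · 1{S = 1, A = 0} / (p (1 - e))`; since
`P(X = x, S = 1, A = 1) = p e P(X = x)` and `P(X = x, S = 1, A = 0) = p (1 - e) P(X = x)`,
exchangeability over `A` turns this into `E[Y¹ - Y⁰ | X = x, S = 1]`, and exchangeability
over `S` into `E[Y¹ - Y⁰ | X = x]`.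
-/

open scoped Classical
open Finset

section PartialExpectation

variable {Ω : Type*} [Fintype Ω] {P : Ω → ℝ}

noncomputable def partialExp (P g : Ω → ℝ) (E : Ω → Prop) : ℝ :=
  ∑ ω, if E ω then P ω * g ω else 0

theorem cexp_eq_partialExp_div (g : Ω → ℝ) (E : Ω → Prop) :
    cexp P g E = partialExp P g E / prW P E := rfl

theorem partialExp_congr {g h : Ω → ℝ} {E : Ω → Prop} (hgh : ∀ ω, E ω → g ω = h ω) :
    partialExp P g E = partialExp P h E :=
  Finset.sum_congr rfl fun ω _ => ite_congr rfl (fun hω => by rw [hgh ω hω]) fun _ => rfl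

theorem cexp_congr {g h : Ω → ℝ} {E : Ω → Prop} (hgh : ∀ ω, E ω → g ω = h ω) :
    cexp P g E = cexp P h E := by
  rw [cexp_eq_partialExp_div, cexp_eq_partialExp_div, partialExp_congr hgh]

theorem partialExp_sub (g h : Ω → ℝ) (E : Ω → Prop) :
    partialExp P (fun ω => g ω - h ω) E = partialExp P g E - partialExp P h E := by
  simp only [partialExp, ← Finset.sum_sub_distrib]
  exact Finset.sum_congr rfl fun ω _ => by split_ifs <;> ring

theorem partialExp_const_mul (c : ℝ) (g : Ω → ℝ) (E : Ω → Prop) :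
    partialExp P (fun ω => c * g ω) E = c * partialExp P g E := by
  simp only [partialExp, Finset.mul_sum]
  exact Finset.sum_congr rfl fun ω _ => by split_ifs <;> ring

theorem partialExp_ite (F : Ω → Prop) (g : Ω → ℝ) (E : Ω → Prop) :
    partialExp P (fun ω => if F ω then g ω else 0) E = partialExp P g (fun ω => E ω ∧ F ω) :=
  Finset.sum_congr rfl fun ω _ => by by_cases E ω <;> by_cases F ω <;> simp [*]

theorem partialExp_indicator (F E : Ω → Prop) :
    partialExp P (fun ω => if F ω then 1 else 0) E = prW P (fun ω => E ω ∧ F ω) :=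
  Finset.sum_congr rfl fun ω _ => by by_cases E ω <;> by_cases F ω <;> simp [*]

theorem cexp_sub (g h : Ω → ℝ) (E : Ω → Prop) :
    cexp P (fun ω => g ω - h ω) E = cexp P g E - cexp P h E := by
  simp only [cexp_eq_partialExp_div, partialExp_sub, sub_div]

theorem prW_nonneg (hP0 : ∀ ω, 0 ≤ P ω) (E : Ω → Prop) : 0 ≤ prW P E :=
  Finset.sum_nonneg fun ω _ => by split_ifs <;> simp [hP0 ω]

theorem prW_and_eq_one_add_prW_and_eq_zero {A : Ω → ℝ} (hA : ∀ ω, A ω = 0 ∨ A ω = 1)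
    (E : Ω → Prop) :
    prW P (fun ω => E ω ∧ A ω = 1) + prW P (fun ω => E ω ∧ A ω = 0) = prW P E := by
  simp only [prW, ← Finset.sum_add_distrib]
  exact Finset.sum_congr rfl fun ω _ => by rcases hA ω with h | h <;> simp [h]

/-- On a null event `cexp` is the junk value `x / 0 = 0`, but `partialExp` vanishes too. -/
theorem partialExp_eq_cexp_mul_prW (hP0 : ∀ ω, 0 ≤ P ω) (g : Ω → ℝ) (E : Ω → Prop) :
    partialExp P g E = cexp P g E * prW P E := by
  by_cases hE : prW P E = 0
  · have hnull : ∀ ω, E ω → P ω = 0 := fun ω hω => by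
      have := (Finset.sum_eq_zero_iff_of_nonneg fun ω _ => by
        split_ifs <;> simp [hP0 ω]).mp hE ω (Finset.mem_univ ω)
      simpa [hω] using this
    rw [hE, mul_zero]
    exact Finset.sum_eq_zero fun ω _ => by by_cases hω : E ω <;> simp [hω, hnull ω]
  · rw [cexp_eq_partialExp_div, div_mul_cancel₀ _ hE]

theorem partialExp_comp_eq_sum {𝒳 : Type*} (g : Ω → ℝ) (X : Ω → 𝒳) (Q : 𝒳 → Prop) :
    partialExp P g (fun ω => Q (X ω))
      = ∑ x ∈ Finset.univ.image X, if Q x then partialExp P g (fun ω => X ω = x) else 0 := by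
  rw [partialExp, ← Finset.sum_fiberwise_of_maps_to
    (fun ω _ => Finset.mem_image_of_mem X (Finset.mem_univ ω))]
  refine Finset.sum_congr rfl fun x _ => ?_
  rw [Finset.sum_filter]
  split_ifs with hQ
  · exact Finset.sum_congr rfl fun ω _ => by by_cases hω : X ω = x <;> simp [hω, hQ]
  · exact Finset.sum_eq_zero fun ω _ => by by_cases hω : X ω = x <;> simp [hω, hQ]

theorem cexp_comp_congr_of_fiber {𝒳 : Type*} (hP0 : ∀ ω, 0 ≤ P ω) {g h : Ω → ℝ}
    (X : Ω → 𝒳) (Q : 𝒳 → Prop)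
    (hfiber : ∀ x, 0 < prW P (fun ω => X ω = x) →
      cexp P g (fun ω => X ω = x) = cexp P h (fun ω => X ω = x)) :
    cexp P g (fun ω => Q (X ω)) = cexp P h (fun ω => Q (X ω)) := by
  have hfiber' : ∀ x, partialExp P g (fun ω => X ω = x) = partialExp P h (fun ω => X ω = x) := by
    intro x
    rw [partialExp_eq_cexp_mul_prW hP0, partialExp_eq_cexp_mul_prW hP0]
    rcases (prW_nonneg hP0 fun ω => X ω = x).eq_or_lt with hnull | hpos
    · rw [← hnull, mul_zero, mul_zero]
    · rw [hfiber x hpos]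
  rw [cexp_eq_partialExp_div, cexp_eq_partialExp_div, partialExp_comp_eq_sum,
    partialExp_comp_eq_sum]
  simp only [hfiber']

end PartialExpectation

theorem ipw_weight_mul_eq {s a y y0 y1 p e : ℝ} (hs : s = 0 ∨ s = 1) (ha : a = 0 ∨ a = 1)
    (hcons : s = 1 → y = a * y1 + (1 - a) * y0) (hp : p ≠ 0) (he : e ≠ 0) (he' : 1 - e ≠ 0) :
    s * (a - e) / (p * e * (1 - e)) * y
      = (p * e)⁻¹ * (if s = 1 ∧ a = 1 then y1 else 0)
        - (p * (1 - e))⁻¹ * (if s = 1 ∧ a = 0 then y0 else 0) := by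
  rcases hs with rfl | rfl
  · simp
  · rcases ha with rfl | rfl
    · simp [hcons rfl]
      field_simp
    · simp [hcons rfl]
      field_simp
      simp

theorem cexp_ipw_eq_cexp_sub {Ω : Type*} [Fintype Ω] {P : Ω → ℝ} (hP0 : ∀ ω, 0 ≤ P ω)
    {S A Y Y0 Y1 : Ω → ℝ} (hS : ∀ ω, S ω = 0 ∨ S ω = 1) (hA : ∀ ω, A ω = 0 ∨ A ω = 1)
    (hcons : ∀ ω, S ω = 1 → Y ω = A ω * Y1 ω + (1 - A ω) * Y0 ω)
    {E : Ω → Prop} {p e : ℝ}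
    (hp : p = cexp P (fun ω => if S ω = 1 then 1 else 0) E)
    (he : e = cexp P (fun ω => if A ω = 1 then 1 else 0) (fun ω => E ω ∧ S ω = 1))
    (hexchA1 : 0 < prW P (fun ω => E ω ∧ S ω = 1 ∧ A ω = 1) →
      cexp P Y1 (fun ω => E ω ∧ S ω = 1 ∧ A ω = 1) = cexp P Y1 (fun ω => E ω ∧ S ω = 1))
    (hexchA0 : 0 < prW P (fun ω => E ω ∧ S ω = 1 ∧ A ω = 0) →
      cexp P Y0 (fun ω => E ω ∧ S ω = 1 ∧ A ω = 0) = cexp P Y0 (fun ω => E ω ∧ S ω = 1))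
    (hexchS : 0 < prW P (fun ω => E ω ∧ S ω = 1) →
      cexp P (fun ω => Y1 ω - Y0 ω) (fun ω => E ω ∧ S ω = 1)
        = cexp P (fun ω => Y1 ω - Y0 ω) E)
    (hE : 0 < prW P E) (hp0 : 0 < p) (he0 : 0 < e) (he1 : e < 1) :
    cexp P (fun ω => S ω * (A ω - e) / (p * e * (1 - e)) * Y ω) E
      = cexp P (fun ω => Y1 ω - Y0 ω) E := by
  have hprS : prW P (fun ω => E ω ∧ S ω = 1) = p * prW P E := by
    rw [← partialExp_indicator, partialExp_eq_cexp_mul_prW hP0, ← hp]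
  have hprSA : prW P (fun ω => E ω ∧ S ω = 1 ∧ A ω = 1) = e * (p * prW P E) := by
    have h := partialExp_indicator (P := P) (fun ω => A ω = 1) (fun ω => E ω ∧ S ω = 1)
    rw [partialExp_eq_cexp_mul_prW hP0, ← he, hprS] at h
    simp only [and_assoc] at h
    exact h.symm
  have hprSnA : prW P (fun ω => E ω ∧ S ω = 1 ∧ A ω = 0) = (1 - e) * (p * prW P E) := by
    have h := prW_and_eq_one_add_prW_and_eq_zero (P := P) hA (fun ω => E ω ∧ S ω = 1)
    simp only [and_assoc] at h
    linarith
  have hY1 : partialExp P Y1 (fun ω => E ω ∧ S ω = 1 ∧ A ω = 1)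
      = e * (p * prW P E) * cexp P Y1 (fun ω => E ω ∧ S ω = 1) := by
    rw [partialExp_eq_cexp_mul_prW hP0, hexchA1 (by rw [hprSA]; positivity), hprSA, mul_comm]
  have hY0 : partialExp P Y0 (fun ω => E ω ∧ S ω = 1 ∧ A ω = 0)
      = (1 - e) * (p * prW P E) * cexp P Y0 (fun ω => E ω ∧ S ω = 1) := by
    have : 0 < 1 - e := sub_pos.mpr he1
    rw [partialExp_eq_cexp_mul_prW hP0, hexchA0 (by rw [hprSnA]; positivity), hprSnA, mul_comm]
  have hipw : partialExp P (fun ω => S ω * (A ω - e) / (p * e * (1 - e)) * Y ω) E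
      = prW P E * cexp P (fun ω => Y1 ω - Y0 ω) E := by
    have he' : 1 - e ≠ 0 := (sub_pos.mpr he1).ne'
    calc partialExp P (fun ω => S ω * (A ω - e) / (p * e * (1 - e)) * Y ω) E
        = (p * e)⁻¹ * partialExp P Y1 (fun ω => E ω ∧ S ω = 1 ∧ A ω = 1)
          - (p * (1 - e))⁻¹ * partialExp P Y0 (fun ω => E ω ∧ S ω = 1 ∧ A ω = 0) := by
          rw [← partialExp_ite, ← partialExp_ite, ← partialExp_const_mul, ← partialExp_const_mul,
            ← partialExp_sub]
          exact partialExp_congr fun ω _ => by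
            convert ipw_weight_mul_eq (hS ω) (hA ω) (hcons ω) hp0.ne' he0.ne' he'
      _ = prW P E * (cexp P Y1 (fun ω => E ω ∧ S ω = 1) - cexp P Y0 (fun ω => E ω ∧ S ω = 1)) := by
          rw [hY1, hY0]
          field_simp
      _ = prW P E * cexp P (fun ω => Y1 ω - Y0 ω) E := by
          rw [← cexp_sub, hexchS (by rw [hprS]; positivity)]
  rw [cexp_eq_partialExp_div, hipw, mul_div_cancel_left₀ _ hE.ne']

theorem ipw_identification_of_cate_general
    {Ω 𝒳 𝒲 : Type*} [Fintype Ω]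
    (P : Ω → ℝ) (hP0 : ∀ ω, 0 ≤ P ω)
    (S A Y Y0 Y1 : Ω → ℝ) (X : Ω → 𝒳) (f : 𝒳 → 𝒲)
    (hS : ∀ ω, S ω = 0 ∨ S ω = 1) (hA : ∀ ω, A ω = 0 ∨ A ω = 1)
    -- consistency: Y = A·Y¹ + (1−A)·Y⁰ on {S = 1}
    (hcons : ∀ ω, S ω = 1 → Y ω = A ω * Y1 ω + (1 - A ω) * Y0 ω)
    (e1 p : 𝒳 → ℝ)
    (hp : ∀ x, p x = cexp P (fun ω => if S ω = 1 then 1 else 0) (fun ω => X ω = x))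
    (he1 : ∀ x, e1 x = cexp P (fun ω => if A ω = 1 then 1 else 0)
      (fun ω => X ω = x ∧ S ω = 1))
    -- (i) mean exchangeability over A in the trial, for a = 1 and a = 0
    (hexchA1 : ∀ x, 0 < prW P (fun ω => X ω = x ∧ S ω = 1 ∧ A ω = 1) →
      cexp P Y1 (fun ω => X ω = x ∧ S ω = 1 ∧ A ω = 1)
        = cexp P Y1 (fun ω => X ω = x ∧ S ω = 1))
    (hexchA0 : ∀ x, 0 < prW P (fun ω => X ω = x ∧ S ω = 1 ∧ A ω = 0) →
      cexp P Y0 (fun ω => X ω = x ∧ S ω = 1 ∧ A ω = 0)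
        = cexp P Y0 (fun ω => X ω = x ∧ S ω = 1))
    -- (ii) mean exchangeability over S
    (hexchS : ∀ x, 0 < prW P (fun ω => X ω = x ∧ S ω = 1) →
      cexp P (fun ω => Y1 ω - Y0 ω) (fun ω => X ω = x ∧ S ω = 1)
        = cexp P (fun ω => Y1 ω - Y0 ω) (fun ω => X ω = x))
    -- (iii) positivity on the support of X
    (hpos : ∀ x, 0 < prW P (fun ω => X ω = x) → 0 < p x ∧ 0 < e1 x ∧ e1 x < 1) :
    ∀ w, 0 < prW P (fun ω => f (X ω) = w) →
      cexp P (fun ω => Y1 ω - Y0 ω) (fun ω => f (X ω) = w)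
        = cexp P
            (fun ω => S ω * (A ω - e1 (X ω)) / (p (X ω) * e1 (X ω) * (1 - e1 (X ω))) * Y ω)
            (fun ω => f (X ω) = w) := by
  intro w _
  refine cexp_comp_congr_of_fiber hP0 X (fun x => f x = w) fun x hx => ?_
  obtain ⟨hpx, he0, he1'⟩ := hpos x hx
  refine (cexp_ipw_eq_cexp_sub hP0 hS hA hcons (hp x) (he1 x) (hexchA1 x) (hexchA0 x) (hexchS x)
    hx hpx he0 he1').symm.trans (cexp_congr fun ω hω => ?_)
  rw [hω]

/-- IPW identification of the CATE in the target population: under consistency,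
    mean exchangeability over `A` in the trial, mean exchangeability over `S`, and
    positivity, `E[Y¹ − Y⁰ | W=w]` equals the conditional mean of the IPW-weighted
    observed outcome, for `W = f(X)` a coarsening of `X`. -/
theorem ipw_identification_of_cate
    {Ω 𝒳 𝒲 : Type*} [Fintype Ω]
    (P : Ω → ℝ) (hP0 : ∀ ω, 0 ≤ P ω) (hP1 : ∑ ω, P ω = 1)
    (S A Y Y0 Y1 : Ω → ℝ) (X : Ω → 𝒳) (f : 𝒳 → 𝒲)
    (hS : ∀ ω, S ω = 0 ∨ S ω = 1) (hA : ∀ ω, A ω = 0 ∨ A ω = 1)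
    -- consistency: Y = A·Y¹ + (1−A)·Y⁰ on {S = 1}
    (hcons : ∀ ω, S ω = 1 → Y ω = A ω * Y1 ω + (1 - A ω) * Y0 ω)
    (e1 p : 𝒳 → ℝ)
    (hp : ∀ x, p x = cexp P (fun ω => if S ω = 1 then 1 else 0) (fun ω => X ω = x))
    (he1 : ∀ x, e1 x = cexp P (fun ω => if A ω = 1 then 1 else 0)
      (fun ω => X ω = x ∧ S ω = 1))
    -- (i) mean exchangeability over A in the trial, for a = 1 and a = 0
    (hexchA1 : ∀ x, 0 < prW P (fun ω => X ω = x ∧ S ω = 1 ∧ A ω = 1) →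
      cexp P Y1 (fun ω => X ω = x ∧ S ω = 1 ∧ A ω = 1)
        = cexp P Y1 (fun ω => X ω = x ∧ S ω = 1))
    (hexchA0 : ∀ x, 0 < prW P (fun ω => X ω = x ∧ S ω = 1 ∧ A ω = 0) →
      cexp P Y0 (fun ω => X ω = x ∧ S ω = 1 ∧ A ω = 0)
        = cexp P Y0 (fun ω => X ω = x ∧ S ω = 1))
    -- (ii) mean exchangeability over S
    (hexchS : ∀ x, 0 < prW P (fun ω => X ω = x ∧ S ω = 1) →
      cexp P (fun ω => Y1 ω - Y0 ω) (fun ω => X ω = x ∧ S ω = 1)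
        = cexp P (fun ω => Y1 ω - Y0 ω) (fun ω => X ω = x))
    -- (iii) positivity on the support of X
    (hpos : ∀ x, 0 < prW P (fun ω => X ω = x) → 0 < p x ∧ 0 < e1 x ∧ e1 x < 1) :
    ∀ w, 0 < prW P (fun ω => f (X ω) = w) →
      cexp P (fun ω => Y1 ω - Y0 ω) (fun ω => f (X ω) = w)
        = cexp P
            (fun ω => S ω * (A ω - e1 (X ω)) / (p (X ω) * e1 (X ω) * (1 - e1 (X ω))) * Y ω)
            (fun ω => f (X ω) = w) :=
  ipw_identification_of_cate_general P hP0 S A Y Y0 Y1 X f hS hA hcons e1 p hp he1 hexchA1 hexchA0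
    hexchS hpos
end

section
/- (Double robustness over the participation model.) On a finite probability space with S, A ∈ {0,1}, X discrete, e_1(x) = P[A=1|X=x,S=1] ∈ (0,1), e_0 = 1−e_1, let q: range(X) → (0,1] be an arbitrary function (a possibly misspecified participation model), and let g_a(x) = E[Y | X=x, S=1, A=a] be the true outcome regressions, g(X,A) = A·g_1(X)+(1−A)·g_0(X). Then the doubly robust function φ_q = S·(A − e_1(X))/(q(X)·e_1(X)·e_0(X))·(Y − g(X,A)) + g_1(X) − g_0(X) satisfies E[φ_q | X=x] = g_1(x) − g_0(x) for every x in the support of X with P[X=x, S=1, A=a] > 0 for a = 0,1. -/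
open scoped Classical
open Finset

/-!
The residual `Y - g(X, A)` has mean zero on every cell `{X = x, S = 1, A = a}`, because `gₐ(x)`
is by definition its mean there. On `{X = x}` the weight in front of the residual depends only on
`S` and `A`, so the residual term of `φ_q` is a combination of these cell means and vanishes,
whatever `q` and `e₁` are; what is left is the constant `g₁(x) - g₀(x)`.
-/

noncomputable def expOn {Ω : Type*} [Fintype Ω] (P : Ω → ℝ) (f : Ω → ℝ) (E : Ω → Prop) : ℝ :=
  ∑ ω, if E ω then P ω * f ω else 0

section

variable {Ω : Type*} [Fintype Ω] (P : Ω → ℝ)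

lemma expOn_congr {f f' : Ω → ℝ} {E : Ω → Prop} (h : ∀ ω, E ω → f ω = f' ω) :
    expOn P f E = expOn P f' E :=
  sum_congr rfl fun ω _ => by by_cases hω : E ω <;> simp [hω, h]

lemma expOn_sub_const (f : Ω → ℝ) (c : ℝ) (E : Ω → Prop) :
    expOn P (fun ω => f ω - c) E = expOn P f E - c * prW P E := by
  rw [expOn, expOn, prW, mul_sum, ← sum_sub_distrib]
  refine sum_congr rfl fun ω _ => ?_
  split_ifs <;> ring

lemma cexp_eq_iff_expOn_sub_eq_zero {f : Ω → ℝ} {E : Ω → Prop} (hE : prW P E ≠ 0) (c : ℝ) :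
    cexp P f E = c ↔ expOn P (fun ω => f ω - c) E = 0 := by
  rw [expOn_sub_const, sub_eq_zero, cexp, div_eq_iff hE]
  rfl

end

lemma expOn_weighted_residual {Ω 𝒳 : Type*} [Fintype Ω] (P : Ω → ℝ) (S A Y : Ω → ℝ) (X : Ω → 𝒳)
    (hS : ∀ ω, S ω = 0 ∨ S ω = 1) (hA : ∀ ω, A ω = 0 ∨ A ω = 1)
    (w : 𝒳 → ℝ → ℝ) (g0 g1 : 𝒳 → ℝ) (x : 𝒳) :
    expOn P (fun ω => S ω * w (X ω) (A ω) * (Y ω - (A ω * g1 (X ω) + (1 - A ω) * g0 (X ω))))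
        (fun ω => X ω = x)
      = w x 1 * expOn P (fun ω => Y ω - g1 x) (fun ω => X ω = x ∧ S ω = 1 ∧ A ω = 1)
        + w x 0 * expOn P (fun ω => Y ω - g0 x) (fun ω => X ω = x ∧ S ω = 1 ∧ A ω = 0) := by
  rw [expOn, expOn, expOn, mul_sum, mul_sum, ← sum_add_distrib]
  refine sum_congr rfl fun ω _ => ?_
  by_cases hX : X ω = x
  · rcases hS ω with hs | hs <;> rcases hA ω with ha | ha <;> simp [hX, hs, ha] <;> ring
  · simp [hX]

theorem double_robustness_participation_model_general
    {Ω 𝒳 : Type*} [Fintype Ω]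
    (P : Ω → ℝ)
    (S A Y : Ω → ℝ) (X : Ω → 𝒳)
    (hS : ∀ ω, S ω = 0 ∨ S ω = 1) (hA : ∀ ω, A ω = 0 ∨ A ω = 1)
    (e1 e0 : 𝒳 → ℝ)
    -- a possibly misspecified participation model
    (q : 𝒳 → ℝ)
    -- the true outcome regressions
    (g0 g1 : 𝒳 → ℝ)
    (hg1 : ∀ x, g1 x = cexp P Y (fun ω => X ω = x ∧ S ω = 1 ∧ A ω = 1))
    (hg0 : ∀ x, g0 x = cexp P Y (fun ω => X ω = x ∧ S ω = 1 ∧ A ω = 0))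
    (φq : Ω → ℝ)
    (hφq : ∀ ω, φq ω =
      S ω * (A ω - e1 (X ω)) / (q (X ω) * e1 (X ω) * e0 (X ω)) *
        (Y ω - (A ω * g1 (X ω) + (1 - A ω) * g0 (X ω)))
      + g1 (X ω) - g0 (X ω)) :
    ∀ x, 0 < prW P (fun ω => X ω = x) →
      0 < prW P (fun ω => X ω = x ∧ S ω = 1 ∧ A ω = 1) →
      0 < prW P (fun ω => X ω = x ∧ S ω = 1 ∧ A ω = 0) →
      cexp P φq (fun ω => X ω = x) = g1 x - g0 x := by
  intro x hx h1 h0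
  have hcell1 := (cexp_eq_iff_expOn_sub_eq_zero P h1.ne' (g1 x)).1 (hg1 x).symm
  have hcell0 := (cexp_eq_iff_expOn_sub_eq_zero P h0.ne' (g0 x)).1 (hg0 x).symm
  set w : 𝒳 → ℝ → ℝ := fun x a => (a - e1 x) / (q x * e1 x * e0 x)
  rw [cexp_eq_iff_expOn_sub_eq_zero P hx.ne']
  calc expOn P (fun ω => φq ω - (g1 x - g0 x)) (fun ω => X ω = x)
      = expOn P (fun ω => S ω * w (X ω) (A ω) *
          (Y ω - (A ω * g1 (X ω) + (1 - A ω) * g0 (X ω)))) (fun ω => X ω = x) :=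
        expOn_congr P fun ω hω => by rw [hφq, hω, mul_div_assoc]; ring
    _ = 0 := by rw [expOn_weighted_residual P S A Y X hS hA, hcell1, hcell0]; ring

/-- Double robustness over the participation model: with the true outcome regressions
    `gₐ(x) = E[Y | X=x, S=1, A=a]` and an arbitrary participation model `q : 𝒳 → (0,1]`,
    the augmented function `φ_q` has conditional mean `g₁(x) − g₀(x)` given `X = x`. -/
theorem double_robustness_participation_model
    {Ω 𝒳 : Type*} [Fintype Ω]
    (P : Ω → ℝ) (hP0 : ∀ ω, 0 ≤ P ω) (hP1 : ∑ ω, P ω = 1)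
    (S A Y : Ω → ℝ) (X : Ω → 𝒳)
    (hS : ∀ ω, S ω = 0 ∨ S ω = 1) (hA : ∀ ω, A ω = 0 ∨ A ω = 1)
    (e1 e0 : 𝒳 → ℝ)
    (he1 : ∀ x, e1 x = cexp P (fun ω => if A ω = 1 then 1 else 0)
      (fun ω => X ω = x ∧ S ω = 1))
    (he0 : ∀ x, e0 x = 1 - e1 x)
    (he1pos : ∀ x, 0 < prW P (fun ω => X ω = x) → 0 < e1 x ∧ e1 x < 1)
    -- a possibly misspecified participation model
    (q : 𝒳 → ℝ) (hq : ∀ x, 0 < q x ∧ q x ≤ 1)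
    -- the true outcome regressions
    (g0 g1 : 𝒳 → ℝ)
    (hg1 : ∀ x, g1 x = cexp P Y (fun ω => X ω = x ∧ S ω = 1 ∧ A ω = 1))
    (hg0 : ∀ x, g0 x = cexp P Y (fun ω => X ω = x ∧ S ω = 1 ∧ A ω = 0))
    (φq : Ω → ℝ)
    (hφq : ∀ ω, φq ω =
      S ω * (A ω - e1 (X ω)) / (q (X ω) * e1 (X ω) * e0 (X ω)) *
        (Y ω - (A ω * g1 (X ω) + (1 - A ω) * g0 (X ω)))
      + g1 (X ω) - g0 (X ω)) :
    ∀ x, 0 < prW P (fun ω => X ω = x) →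
      0 < prW P (fun ω => X ω = x ∧ S ω = 1 ∧ A ω = 1) →
      0 < prW P (fun ω => X ω = x ∧ S ω = 1 ∧ A ω = 0) →
      cexp P φq (fun ω => X ω = x) = g1 x - g0 x :=
  double_robustness_participation_model_general P S A Y X hS hA e1 e0 q g0 g1 hg1 hg0 φq hφq
end
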